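/- arXiv:2605.27943 — 2 statements merged into one kernel-verified Lean document; each statement's English description precedes it below -/
import Mathlib

section
/- Let ℓ ≥ 2 be an integer, let G ∈ H_ℓ, and let H be an induced theta subgraph of G all of whose cycles are even. Then either all three ears of H have length ℓ, or exactly one ear of H has length 1. -/
open SimpleGraph

variable {V : Type*}

namespace SimpleGraph

/-- The internal vertices of a walk, as a list. -/
def Walk.interior {G : SimpleGraph V} {u v : V} (p : G.Walk u v) : List V :=
  p.support.tail.dropLast

/-- A hole: an induced cycle of length at least `4`. -/
def IsHole (G : SimpleGraph V) {v : V} (C : G.Walk v v) : Prop :=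
  C.IsCycle ∧ 4 ≤ C.length ∧
    ∀ x ∈ C.support, ∀ y ∈ C.support, G.Adj x y → s(x, y) ∈ C.edges

/-- An even hole: a hole of even length. -/
def IsEvenHole (G : SimpleGraph V) {v : V} (C : G.Walk v v) : Prop :=
  G.IsHole C ∧ Even C.length

/-- `G ∈ H_ℓ`: `G` has girth `2ℓ` and no even hole of length greater than `2ℓ`. -/
def InFamilyH (G : SimpleGraph V) (ℓ : ℕ) : Prop :=
  G.girth = 2 * ℓ ∧
    ∀ (v : V) (C : G.Walk v v), G.IsHole C → Even C.length → C.length ≤ 2 * ℓ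

/-- `G` has a `K1`-cut: a vertex whose deletion disconnects `G`. -/
def HasK1Cut (G : SimpleGraph V) : Prop :=
  ∃ x : V, ¬ (G.induce {y : V | y ≠ x}).Connected

/-- `G` has a `K2`-cut: a pair of adjacent vertices whose deletion disconnects `G`. -/
def HasK2Cut (G : SimpleGraph V) : Prop :=
  ∃ x y : V, G.Adj x y ∧ ¬ (G.induce {z : V | z ≠ x ∧ z ≠ y}).Connected

/-- `P` is an `(s,t)`-jump over the hole `C`: an induced path with both ends on `C`
whose internal vertices avoid `C`. -/
def IsJump (G : SimpleGraph V) {v s t : V} (C : G.Walk v v) (P : G.Walk s t) : Prop :=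
  P.IsPath ∧
    (∀ x ∈ P.support, ∀ y ∈ P.support, G.Adj x y → s(x, y) ∈ P.edges) ∧
    s ∈ C.support ∧ t ∈ C.support ∧
    ∀ x ∈ P.interior, x ∉ C.support

/-- `P` is a short `(s,t)`-jump over `C`: a jump with non-adjacent ends such that no vertex
of `C` other than `s, t` has a neighbour among the internal vertices of `P`. -/
def IsShortJump (G : SimpleGraph V) {v s t : V} (C : G.Walk v v) (P : G.Walk s t) : Prop :=
  G.IsJump C P ∧ ¬ G.Adj s t ∧
    ∀ x ∈ C.support, x ≠ s → x ≠ t → ∀ y ∈ P.interior, ¬ G.Adj x y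

/-- A short `(s,t)`-jump `P` over an even hole `C` is of type-o if the cycle formed by `P`
together with an `(s,t)`-arc of `C` is odd.  (For an even hole both arcs give the same parity.) -/
def JumpTypeO (G : SimpleGraph V) {v s t : V} (C : G.Walk v v) (P : G.Walk s t) : Prop :=
  ∃ Q : G.Walk s t, Q.IsPath ∧ (∀ e ∈ Q.edges, e ∈ C.edges) ∧ Odd (P.length + Q.length)

/-- A short `(s,t)`-jump `P` over an even hole `C` is of type-e if the cycle formed by `P`
together with an `(s,t)`-arc of `C` is even. -/
def JumpTypeE (G : SimpleGraph V) {v s t : V} (C : G.Walk v v) (P : G.Walk s t) : Prop :=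
  ∃ Q : G.Walk s t, Q.IsPath ∧ (∀ e ∈ Q.edges, e ∈ C.edges) ∧ Even (P.length + Q.length)

/-- `P` is a local `(s,t)`-jump over `C` across the single vertex `c`:
`s, c, t` are consecutive on `C`, the ends `s, t` are non-adjacent, `c` has a neighbour among the
internal vertices of `P`, and no other vertex of `C` has a neighbour among them. -/
def IsLocalJumpAcrossOne (G : SimpleGraph V) {v s t : V} (C : G.Walk v v) (P : G.Walk s t)
    (c : V) : Prop :=
  G.IsJump C P ∧ ¬ G.Adj s t ∧ s(s, c) ∈ C.edges ∧ s(c, t) ∈ C.edges ∧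
    (∃ y ∈ P.interior, G.Adj c y) ∧
    ∀ x ∈ C.support, x ≠ s → x ≠ c → x ≠ t → ∀ y ∈ P.interior, ¬ G.Adj x y

/-- The vertices `a, b, c, d` appear on the cycle `C` in this cyclic order. -/
def InCyclicOrder {G : SimpleGraph V} {v : V} (C : G.Walk v v) (a b c d : V) : Prop :=
  ∃ l1 l2 l3 l4 : List V,
    C.support.tail ~r (a :: (l1 ++ b :: (l2 ++ c :: (l3 ++ d :: l4))))

/-- Two jumps over `C`, with ends `u1, v1` and `u2, v2` respectively, are crossing if their
ends are four distinct vertices interleaving on `C`. -/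
def Crossing {G : SimpleGraph V} {v : V} (C : G.Walk v v) (u1 v1 u2 v2 : V) : Prop :=
  [u1, v1, u2, v2].Nodup ∧
    (InCyclicOrder C u1 u2 v1 v2 ∨ InCyclicOrder C u1 v2 v1 u2)

/-- Two jumps over `C` are parallel if they are not crossing. -/
def ParallelJumps {G : SimpleGraph V} {v : V} (C : G.Walk v v) (u1 v1 u2 v2 : V) : Prop :=
  ¬ Crossing C u1 v1 u2 v2

/-- The distance between `s` and `t` along the cycle `C`. -/
noncomputable def cycleDist {G : SimpleGraph V} {v : V} (C : G.Walk v v) (s t : V) : ℕ :=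
  (SimpleGraph.fromEdgeSet {e : Sym2 V | e ∈ C.edges}).dist s t

/-- `P1, P2, P3` form an induced theta subgraph of `G`:  three pairwise distinct,
pairwise internally disjoint induced-union paths joining two distinct vertices `a, b`. -/
def IsInducedTheta (G : SimpleGraph V) {a b : V} (P1 P2 P3 : G.Walk a b) : Prop :=
  a ≠ b ∧ P1.IsPath ∧ P2.IsPath ∧ P3.IsPath ∧
  P1 ≠ P2 ∧ P1 ≠ P3 ∧ P2 ≠ P3 ∧
  (∀ x ∈ P1.interior, x ∉ P2.interior) ∧
  (∀ x ∈ P1.interior, x ∉ P3.interior) ∧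
  (∀ x ∈ P2.interior, x ∉ P3.interior) ∧
  (∀ x, (x ∈ P1.support ∨ x ∈ P2.support ∨ x ∈ P3.support) →
    ∀ y, (y ∈ P1.support ∨ y ∈ P2.support ∨ y ∈ P3.support) →
      G.Adj x y → (s(x, y) ∈ P1.edges ∨ s(x, y) ∈ P2.edges ∨ s(x, y) ∈ P3.edges))

end SimpleGraph

/-! If `a` and `b` are adjacent, the edge `ab` is an ear, and no other ear can be a single edge
since the ears are distinct. Otherwise, because the theta is induced, any two ears form a hole;
it is even, so its length is at least the girth `2ℓ` and at most `2ℓ`. The three pairwise sums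
of ear lengths all being `2ℓ` forces every ear to have length `ℓ`. -/

namespace SimpleGraph

variable {G : SimpleGraph V}

namespace Walk

lemma two_le_length_of_ne_of_not_adj {u v : V} (p : G.Walk u v) (huv : u ≠ v)
    (hadj : ¬ G.Adj u v) : 2 ≤ p.length := by
  by_contra! hp
  interval_cases h : p.length
  · exact huv (p.eq_of_length_eq_zero h)
  · exact hadj (p.adj_of_length_eq_one h)

lemma IsPath.mem_support_tail_iff {u v x : V} {p : G.Walk u v} (hp : p.IsPath) :
    x ∈ p.support.tail ↔ x ∈ p.support ∧ x ≠ u := by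
  have hnd := hp.support_nodup
  rw [← p.cons_tail_support] at hnd ⊢
  rw [List.nodup_cons] at hnd
  grind

lemma IsPath.mem_interior_iff {u v x : V} {p : G.Walk u v} (hp : p.IsPath) (huv : u ≠ v) :
    x ∈ p.interior ↔ x ∈ p.support ∧ x ≠ u ∧ x ≠ v := by
  have hne : p.support.tail ≠ [] := List.ne_nil_of_mem (p.end_mem_tail_support_of_ne huv)
  have hlast : p.support.tail.getLast hne = v := by
    rw [List.getLast_tail]; exact p.getLast_support
  have hsupp : p.support = u :: (p.interior ++ [v]) := by
    calc p.support = u :: p.support.tail := p.cons_tail_support.symm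
      _ = u :: (p.interior ++ [v]) := by
        rw [← List.dropLast_append_getLast hne, hlast]; rfl
  have hnd := hp.support_nodup
  rw [hsupp] at hnd ⊢
  simp only [List.nodup_cons, List.mem_append, List.mem_singleton, List.nodup_append] at hnd
  simp only [List.mem_cons, List.mem_append]
  grind

lemma IsPath.isCycle_append_reverse {u v : V} {p q : G.Walk u v} (hp : p.IsPath)
    (hq : q.IsPath) (huv : u ≠ v) (hdisj : ∀ x ∈ p.interior, x ∉ q.interior)
    (hlen : 1 < p.length ∨ 1 < q.length) : (p.append q.reverse).IsCycle := by
  refine hp.isCycle_append hq.reverse (List.disjoint_left.2 fun x hxp hxq => ?_)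
    (by rwa [length_reverse])
  rw [hp.mem_support_tail_iff] at hxp
  rw [hq.reverse.mem_support_tail_iff, support_reverse, List.mem_reverse] at hxq
  exact hdisj x ((hp.mem_interior_iff huv).2 ⟨hxp.1, hxp.2, hxq.2⟩)
    ((hq.mem_interior_iff huv).2 ⟨hxq.1, hxp.2, hxq.2⟩)

end Walk

lemma InFamilyH.length_eq_of_isHole {ℓ : ℕ} (hG : G.InFamilyH ℓ) {v : V} {C : G.Walk v v}
    (hC : G.IsHole C) (heven : Even C.length) : C.length = 2 * ℓ :=
  le_antisymm (hG.2 v C hC heven) (hG.1 ▸ G.girth_le_length hC.1)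

namespace IsInducedTheta

variable {a b : V} {P1 P2 P3 : G.Walk a b}

lemma swap₁₂ (h : G.IsInducedTheta P1 P2 P3) : G.IsInducedTheta P2 P1 P3 := by
  obtain ⟨hab, hP1, hP2, hP3, h12, h13, h23, d12, d13, d23, hind⟩ := h
  refine ⟨hab, hP2, hP1, hP3, h12.symm, h23, h13, fun x hx hx' => d12 x hx' hx, d23, d13,
    fun x hx y hy hxy => ?_⟩
  have := hind x (by tauto) y (by tauto) hxy
  tauto

lemma swap₂₃ (h : G.IsInducedTheta P1 P2 P3) : G.IsInducedTheta P1 P3 P2 := by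
  obtain ⟨hab, hP1, hP2, hP3, h12, h13, h23, d12, d13, d23, hind⟩ := h
  refine ⟨hab, hP1, hP3, hP2, h13, h12, h23.symm, d13, d12, fun x hx hx' => d23 x hx' hx,
    fun x hx y hy hxy => ?_⟩
  have := hind x (by tauto) y (by tauto) hxy
  tauto

lemma length_eq_one_of_adj (h : G.IsInducedTheta P1 P2 P3) (hadj : G.Adj a b) :
    P1.length = 1 ∨ P2.length = 1 ∨ P3.length = 1 := by
  obtain ⟨-, hP1, hP2, hP3, -, -, -, -, -, -, hind⟩ := h
  rcases hind a (Or.inl P1.start_mem_support) b (Or.inl P1.end_mem_support) hadj with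
    he | he | he
  · exact Or.inl (hP1.length_eq_one_of_mem_edges he)
  · exact Or.inr (Or.inl (hP2.length_eq_one_of_mem_edges he))
  · exact Or.inr (Or.inr (hP3.length_eq_one_of_mem_edges he))

lemma length_ne_one (h : G.IsInducedTheta P1 P2 P3) (h1 : P1.length = 1) :
    P2.length ≠ 1 ∧ P3.length ≠ 1 :=
  ⟨fun h2 => h.2.2.2.2.1 (Walk.eq_of_length_le_one h1.le h2.le),
    fun h3 => h.2.2.2.2.2.1 (Walk.eq_of_length_le_one h1.le h3.le)⟩

lemma isHole_append_reverse (h : G.IsInducedTheta P1 P2 P3) (hadj : ¬ G.Adj a b) :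
    G.IsHole (P1.append P2.reverse) := by
  obtain ⟨hab, hP1, hP2, hP3, -, -, -, d12, d13, d23, hind⟩ := h
  have hlen1 := P1.two_le_length_of_ne_of_not_adj hab hadj
  have hlen2 := P2.two_le_length_of_ne_of_not_adj hab hadj
  refine ⟨hP1.isCycle_append_reverse hP2 hab d12 (Or.inl hlen1),
    by simp only [Walk.length_append, Walk.length_reverse]; omega, fun x hx y hy hxy => ?_⟩
  simp only [Walk.mem_support_append_iff, Walk.support_reverse, List.mem_reverse] at hx hy
  rw [Walk.edges_append, Walk.edges_reverse, List.mem_append, List.mem_reverse]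
  rcases hind x (by tauto) y (by tauto) hxy with he | he | he
  · exact Or.inl he
  · exact Or.inr he
  have hend : ∀ z, z ∈ P1.support ∨ z ∈ P2.support → z ∈ P3.support → z = a ∨ z = b := by
    intro z hz hz3
    by_contra! hzab
    have hz3' := (hP3.mem_interior_iff hab).2 ⟨hz3, hzab⟩
    rcases hz with hz | hz
    · exact d13 z ((hP1.mem_interior_iff hab).2 ⟨hz, hzab⟩) hz3'
    · exact d23 z ((hP2.mem_interior_iff hab).2 ⟨hz, hzab⟩) hz3'
  rcases hend x hx (P3.fst_mem_support_of_mem_edges he) with rfl | rfl <;>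
    rcases hend y hy (P3.snd_mem_support_of_mem_edges he) with rfl | rfl
  · exact (G.irrefl hxy).elim
  · exact absurd hxy hadj
  · exact absurd hxy.symm hadj
  · exact (G.irrefl hxy).elim

lemma length_add_eq {ℓ : ℕ} (h : G.IsInducedTheta P1 P2 P3) (hG : G.InFamilyH ℓ)
    (hadj : ¬ G.Adj a b) (heven : Even (P1.length + P2.length)) :
    P1.length + P2.length = 2 * ℓ := by
  have := hG.length_eq_of_isHole (h.isHole_append_reverse hadj)
  simp only [Walk.length_append, Walk.length_reverse] at this
  exact this heven

end IsInducedTheta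

end SimpleGraph

theorem theta_all_cycles_even_general {V : Type*} (G : SimpleGraph V)
    (ℓ : ℕ) (hG : G.InFamilyH ℓ)
    {a b : V} (P1 P2 P3 : G.Walk a b) (hTheta : G.IsInducedTheta P1 P2 P3)
    (h12 : Even (P1.length + P2.length))
    (h13 : Even (P1.length + P3.length))
    (h23 : Even (P2.length + P3.length)) :
    (P1.length = ℓ ∧ P2.length = ℓ ∧ P3.length = ℓ) ∨
    (P1.length = 1 ∧ P2.length ≠ 1 ∧ P3.length ≠ 1) ∨
    (P2.length = 1 ∧ P1.length ≠ 1 ∧ P3.length ≠ 1) ∨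
    (P3.length = 1 ∧ P1.length ≠ 1 ∧ P2.length ≠ 1) := by
  by_cases hadj : G.Adj a b
  · right
    rcases hTheta.length_eq_one_of_adj hadj with h1 | h2 | h3
    · exact Or.inl ⟨h1, hTheta.length_ne_one h1⟩
    · exact Or.inr (Or.inl ⟨h2, hTheta.swap₁₂.length_ne_one h2⟩)
    · exact Or.inr (Or.inr ⟨h3, hTheta.swap₂₃.swap₁₂.length_ne_one h3⟩)
  · have e12 := hTheta.length_add_eq hG hadj h12
    have e13 := hTheta.swap₂₃.length_add_eq hG hadj h13
    have e23 := hTheta.swap₁₂.swap₂₃.length_add_eq hG hadj h23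
    left
    omega

/-- in an induced theta subgraph of a graph in `H_ℓ` all of whose cycles are
even, either all three ears have length `ℓ`, or exactly one ear has length `1`. -/
theorem theta_all_cycles_even {V : Type*} [Fintype V] (G : SimpleGraph V)
    (ℓ : ℕ) (hℓ : 2 ≤ ℓ) (hG : G.InFamilyH ℓ)
    {a b : V} (P1 P2 P3 : G.Walk a b) (hTheta : G.IsInducedTheta P1 P2 P3)
    (h12 : Even (P1.length + P2.length))
    (h13 : Even (P1.length + P3.length))
    (h23 : Even (P2.length + P3.length)) :
    (P1.length = ℓ ∧ P2.length = ℓ ∧ P3.length = ℓ) ∨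
    (P1.length = 1 ∧ P2.length ≠ 1 ∧ P3.length ≠ 1) ∨
    (P2.length = 1 ∧ P1.length ≠ 1 ∧ P3.length ≠ 1) ∨
    (P3.length = 1 ∧ P1.length ≠ 1 ∧ P2.length ≠ 1) :=
  theta_all_cycles_even_general G ℓ hG P1 P2 P3 hTheta h12 h13 h23
end

section
/- Let ℓ ≥ 2 be an integer, let C be an even hole of a graph G ∈ H_ℓ, let P be a short (s,t)-jump over C, and let Q1, Q2 be the two internally disjoint (s,t)-paths of C. If P is of type-o, then |P| > ℓ. If P is of type-e, then |P| = |Q1| = |Q2| = ℓ. -/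
open SimpleGraph

variable {V : Type*}

/-!
Cycles of `G` have length at least the girth `2ℓ`, so the even hole `C` has length exactly `2ℓ`
and `|Q₁| + |Q₂| = 2ℓ`. Each arc `Qᵢ` is induced, because an internal vertex of `Qᵢ` already
carries both of its `C`-edges on `Qᵢ`; shortness of `P` then makes `P ∪ Qᵢ` an induced cycle,
i.e. a hole, of length at least `2ℓ`. Since `|Q₁| ≡ |Q₂| (mod 2)`, both holes have the parity of
`P ∪ Q₁`. If it is odd, each has length at least `2ℓ + 1`, and adding gives `|P| > ℓ`. If it is
even, both are even holes, hence of length exactly `2ℓ`, which forces `|P| = |Q₁| = |Q₂| = ℓ`.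
-/

namespace SimpleGraph

variable {G : SimpleGraph V} {u v w x y : V}

namespace Walk

def IsInduced (p : G.Walk u v) : Prop :=
  ∀ x ∈ p.support, ∀ y ∈ p.support, G.Adj x y → s(x, y) ∈ p.edges

lemma two_le_length_of_not_adj (p : G.Walk u v) (huv : u ≠ v) (hadj : ¬ G.Adj u v) :
    2 ≤ p.length := by
  match p with
  | nil => exact absurd rfl huv
  | cons h nil => exact absurd h hadj
  | cons _ (cons _ _) => simp

lemma mem_interior_of_mem_support {p : G.Walk u v} (hx : x ∈ p.support) (hxu : x ≠ u)
    (hxv : x ≠ v) : x ∈ p.interior := by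
  cases p with
  | nil => exact absurd (by simpa using hx) hxu
  | cons _ q =>
    have hxq : x ∈ q.support := (List.mem_cons.mp hx).resolve_left hxu
    rw [← List.dropLast_append_getLast q.support_ne_nil, getLast_support, List.mem_append,
      List.mem_singleton] at hxq
    exact hxq.resolve_right hxv

lemma support_subset_support_of_edges_subset {p : G.Walk u v} {q : G.Walk w w}
    (hu : u ∈ q.support) (h : p.edges ⊆ q.edges) : p.support ⊆ q.support := by
  induction p with
  | nil => simpa using hu
  | cons _ p ih =>
    rw [edges_cons, List.cons_subset] at h
    rw [support_cons, List.cons_subset]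
    exact ⟨hu, ih (q.snd_mem_support_of_mem_edges h.1) h.2⟩

lemma length_add_length_eq_of_edges_partition {a b c d : V} {p : G.Walk a b} {q : G.Walk c d}
    {r : G.Walk u v} (hp : p.IsTrail) (hq : q.IsTrail) (hr : r.IsTrail)
    (hcover : ∀ e, e ∈ r.edges ↔ e ∈ p.edges ∨ e ∈ q.edges)
    (hdisj : ∀ e ∈ p.edges, e ∉ q.edges) :
    p.length + q.length = r.length := by
  have hnodup : (p.edges ++ q.edges).Nodup :=
    List.nodup_append.mpr ⟨hp.edges_nodup, hq.edges_nodup, fun e he f hf hef => hdisj e he (hef ▸ hf)⟩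
  have hperm : r.edges.Perm (p.edges ++ q.edges) :=
    (List.perm_ext_iff_of_nodup hr.edges_nodup hnodup).mpr fun e => by
      rw [List.mem_append]; exact hcover e
  simpa only [length_edges, List.length_append] using hperm.length_eq.symm

lemma IsPath.ncard_neighborSet_toSubgraph_eq_two {p : G.Walk u v} (hp : p.IsPath)
    (hx : x ∈ p.support) (hxu : x ≠ u) (hxv : x ≠ v) :
    (p.toSubgraph.neighborSet x).ncard = 2 := by
  obtain ⟨i, rfl, hi⟩ := mem_support_iff_exists_getVert.mp hx
  refine hp.ncard_neighborSet_toSubgraph_internal_eq_two (fun h => hxu ?_)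
    (lt_of_le_of_ne hi fun h => hxv ?_)
  · simp [h]
  · simp [h]

/-- An internal vertex of the path has degree two both in the path and in the cycle. -/
lemma IsCycle.mem_edges_of_isPath {C : G.Walk w w} {Q : G.Walk u v} (hC : C.IsCycle)
    (hQ : Q.IsPath) (hQC : Q.edges ⊆ C.edges) (hx : x ∈ Q.support) (hxu : x ≠ u) (hxv : x ≠ v)
    (hxy : s(x, y) ∈ C.edges) : s(x, y) ∈ Q.edges := by
  have hsub : Q.toSubgraph.neighborSet x ⊆ C.toSubgraph.neighborSet x := fun z hz => by
    simp only [Subgraph.mem_neighborSet, adj_toSubgraph_iff_mem_edges] at hz ⊢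
    exact hQC hz
  have hC2 := hC.ncard_neighborSet_toSubgraph_eq_two (C.fst_mem_support_of_mem_edges hxy)
  have hQ2 := hQ.ncard_neighborSet_toSubgraph_eq_two hx hxu hxv
  have heq := Set.eq_of_subset_of_ncard_le hsub (by rw [hC2, hQ2])
    (Set.finite_of_ncard_pos (by rw [hC2]; norm_num))
  have hyC : y ∈ C.toSubgraph.neighborSet x := by
    rwa [Subgraph.mem_neighborSet, adj_toSubgraph_iff_mem_edges]
  rwa [← heq, Subgraph.mem_neighborSet, adj_toSubgraph_iff_mem_edges] at hyC

end Walk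

open Walk

lemma IsHole.isInduced_of_isPath {C : G.Walk w w} {Q : G.Walk u v} (hC : G.IsHole C)
    (hQ : Q.IsPath) (hQC : Q.edges ⊆ C.edges) (hu : u ∈ C.support) (huv : ¬ G.Adj u v) :
    Q.IsInduced := by
  have hsupp := support_subset_support_of_edges_subset hu hQC
  intro x hx y hy hxy
  have hxyC : s(x, y) ∈ C.edges := hC.2.2 x (hsupp hx) y (hsupp hy) hxy
  by_cases hxend : x = u ∨ x = v
  · by_cases hyend : y = u ∨ y = v
    · exfalso
      rcases hxend with rfl | rfl <;> rcases hyend with rfl | rfl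
      exacts [hxy.ne rfl, huv hxy, huv hxy.symm, hxy.ne rfl]
    · push Not at hyend
      rw [Sym2.eq_swap] at hxyC ⊢
      exact hC.1.mem_edges_of_isPath hQ hQC hy hyend.1 hyend.2 hxyC
  · push Not at hxend
    exact hC.1.mem_edges_of_isPath hQ hQC hx hxend.1 hxend.2 hxyC

lemma IsShortJump.not_adj {C : G.Walk w w} {P Q : G.Walk u v} (hP : G.IsShortJump C P)
    (hQC : Q.support ⊆ C.support) (hx : x ∈ Q.support) (hxP : x ∉ P.support)
    (hy : y ∈ P.support) (hyQ : y ∉ Q.support) : ¬ G.Adj x y := by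
  refine hP.2.2 x (hQC hx) ?_ ?_ y (mem_interior_of_mem_support hy ?_ ?_)
  · rintro rfl; exact hxP P.start_mem_support
  · rintro rfl; exact hxP P.end_mem_support
  · rintro rfl; exact hyQ Q.start_mem_support
  · rintro rfl; exact hyQ Q.end_mem_support

lemma IsShortJump.isCycle_append_reverse {C : G.Walk w w} {P Q : G.Walk u v}
    (hP : G.IsShortJump C P) (hQ : Q.IsPath) (hQC : Q.support ⊆ C.support) (huv : u ≠ v) :
    (P.append Q.reverse).IsCycle := by
  refine hP.1.1.isCycle_append hQ.reverse (fun z hzP hzQ => ?_)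
    (.inl (P.two_le_length_of_not_adj huv hP.2.1))
  have hzu : z ≠ u := by
    rintro rfl
    exact (List.nodup_cons.mp (P.cons_tail_support ▸ hP.1.1.support_nodup)).1 hzP
  have hzv : z ≠ v := by
    rintro rfl
    exact (List.nodup_cons.mp (Q.reverse.cons_tail_support ▸ hQ.reverse.support_nodup)).1 hzQ
  have hzQ' : z ∈ Q.support := by
    simpa using Q.reverse.support.mem_of_mem_tail hzQ
  exact hP.1.2.2.2.2 z (mem_interior_of_mem_support (P.support.mem_of_mem_tail hzP) hzu hzv)
    (hQC hzQ')

lemma IsShortJump.isInduced_append_reverse {C : G.Walk w w} {P Q : G.Walk u v}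
    (hP : G.IsShortJump C P) (hQ : Q.IsInduced) (hQC : Q.support ⊆ C.support) :
    (P.append Q.reverse).IsInduced := by
  intro x hx y hy hxy
  simp only [mem_support_append_iff, support_reverse, List.mem_reverse] at hx hy
  rw [edges_append, edges_reverse, List.mem_append, List.mem_reverse]
  by_cases hPP : x ∈ P.support ∧ y ∈ P.support
  · exact .inl (hP.1.2.1 x hPP.1 y hPP.2 hxy)
  by_cases hQQ : x ∈ Q.support ∧ y ∈ Q.support
  · exact .inr (hQ x hQQ.1 y hQQ.2 hxy)
  exfalso
  rcases not_and_or.mp hPP with hxP | hyP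
  · have hxQ := hx.resolve_left hxP
    have hyQ : y ∉ Q.support := fun h => hQQ ⟨hxQ, h⟩
    exact hP.not_adj hQC hxQ hxP (hy.resolve_right hyQ) hyQ hxy
  · have hyQ := hy.resolve_left hyP
    have hxQ : x ∉ Q.support := fun h => hQQ ⟨h, hyQ⟩
    exact hP.not_adj hQC hyQ hyP (hx.resolve_right hxQ) hxQ hxy.symm

lemma IsShortJump.isHole_append_reverse {C : G.Walk w w} {P Q : G.Walk u v}
    (hC : G.IsHole C) (hP : G.IsShortJump C P) (hQ : Q.IsPath) (hQC : Q.edges ⊆ C.edges)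
    (huv : u ≠ v) : G.IsHole (P.append Q.reverse) := by
  have hsupp := support_subset_support_of_edges_subset hP.1.2.2.1 hQC
  refine ⟨hP.isCycle_append_reverse hQ hsupp huv, ?_,
    hP.isInduced_append_reverse (hC.isInduced_of_isPath hQ hQC hP.1.2.2.1 hP.2.1) hsupp⟩
  have hPlen := P.two_le_length_of_not_adj huv hP.2.1
  have hQlen := Q.two_le_length_of_not_adj huv hP.2.1
  rw [length_append, length_reverse]
  omega

lemma InFamilyH.le_length_of_isCycle {ℓ : ℕ} (hG : G.InFamilyH ℓ) {p : G.Walk u u}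
    (hp : p.IsCycle) : 2 * ℓ ≤ p.length :=
  hG.1 ▸ girth_le_length hp

lemma InFamilyH.length_eq_of_isEvenHole {ℓ : ℕ} (hG : G.InFamilyH ℓ) {p : G.Walk u u}
    (hp : G.IsHole p) (heven : Even p.length) : p.length = 2 * ℓ :=
  le_antisymm (hG.2 u p hp heven) (hG.le_length_of_isCycle hp.1)

end SimpleGraph

theorem short_jump_type_lengths_general {V : Type*} (G : SimpleGraph V)
    (ℓ : ℕ) (hG : G.InFamilyH ℓ)
    {v s t : V} (C : G.Walk v v) (hC : G.IsEvenHole C)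
    (P : G.Walk s t) (hP : G.IsShortJump C P)
    (Q1 Q2 : G.Walk s t) (hQ1 : Q1.IsPath) (hQ2 : Q2.IsPath)
    (hcover : ∀ e : Sym2 V, e ∈ C.edges ↔ (e ∈ Q1.edges ∨ e ∈ Q2.edges))
    (hdisj : ∀ e : Sym2 V, e ∈ Q1.edges → e ∉ Q2.edges) :
    (Odd (P.length + Q1.length) → P.length > ℓ) ∧
    (Even (P.length + Q1.length) →
      (P.length = ℓ ∧ Q1.length = ℓ ∧ Q2.length = ℓ)) := by
  have hsumC := Walk.length_add_length_eq_of_edges_partition hQ1.isTrail hQ2.isTrail hC.1.1.isTrail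
    hcover hdisj
  have hsum : Q1.length + Q2.length = 2 * ℓ :=
    hsumC.trans (hG.length_eq_of_isEvenHole hC.1 hC.2)
  have hst : s ≠ t := by
    rintro rfl
    rw [Walk.length_eq_zero_iff.mpr (Walk.isPath_iff_nil.mp hQ1),
      Walk.length_eq_zero_iff.mpr (Walk.isPath_iff_nil.mp hQ2)] at hsumC
    have := hC.1.2.1
    omega
  have hole1 := hP.isHole_append_reverse hC.1 hQ1 (fun e he => (hcover e).mpr (.inl he)) hst
  have hole2 := hP.isHole_append_reverse hC.1 hQ2 (fun e he => (hcover e).mpr (.inr he)) hst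
  have hlen1 : (P.append Q1.reverse).length = P.length + Q1.length := by simp
  have hlen2 : (P.append Q2.reverse).length = P.length + Q2.length := by simp
  have hge1 := hlen1 ▸ hG.le_length_of_isCycle hole1.1
  have hge2 := hlen2 ▸ hG.le_length_of_isCycle hole2.1
  refine ⟨fun hodd => ?_, fun heven => ?_⟩
  · rw [Nat.odd_iff] at hodd
    omega
  · have heven2 : Even (P.length + Q2.length) := by
      rw [Nat.even_iff] at heven ⊢
      omega
    have h1 := hlen1 ▸ hG.length_eq_of_isEvenHole hole1 (hlen1 ▸ heven)
    have h2 := hlen2 ▸ hG.length_eq_of_isEvenHole hole2 (hlen2 ▸ heven2)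
    omega

/-- for a short `(s,t)`-jump `P` over an even hole `C` of a graph in `H_ℓ`, with
`Q1, Q2` the two internally disjoint `(s,t)`-paths of `C`: if `P` is of type-o then `|P| > ℓ`,
and if `P` is of type-e then `|P| = |Q1| = |Q2| = ℓ`. -/
theorem short_jump_type_lengths {V : Type*} [Fintype V] (G : SimpleGraph V)
    (ℓ : ℕ) (hℓ : 2 ≤ ℓ) (hG : G.InFamilyH ℓ)
    {v s t : V} (C : G.Walk v v) (hC : G.IsEvenHole C)
    (P : G.Walk s t) (hP : G.IsShortJump C P)
    (Q1 Q2 : G.Walk s t) (hQ1 : Q1.IsPath) (hQ2 : Q2.IsPath)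
    (hcover : ∀ e : Sym2 V, e ∈ C.edges ↔ (e ∈ Q1.edges ∨ e ∈ Q2.edges))
    (hdisj : ∀ e : Sym2 V, e ∈ Q1.edges → e ∉ Q2.edges) :
    (Odd (P.length + Q1.length) → P.length > ℓ) ∧
    (Even (P.length + Q1.length) →
      (P.length = ℓ ∧ Q1.length = ℓ ∧ Q2.length = ℓ)) :=
  short_jump_type_lengths_general G ℓ hG C hC P hP Q1 Q2 hQ1 hQ2 hcover hdisj
end
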